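/- Let 𝒫_sup ⊂ ℝ^p be compact with positive Lebesgue measure, 𝒯_sup = [0,T], and u : 𝒫_sup × 𝒯_sup → ℝ^{N_h} continuous. Fix N ≤ N_h. For each n ∈ ℕ, draw μ_1, …, μ_n i.i.d. uniformly on 𝒫_sup, set t_k = kT/n for k = 1,…,n, and let V_n ∈ ℝ^{N_h×N} be a semi-orthogonal minimizer of the empirical error (|𝒫_sup × 𝒯_sup|/n²) Σ_{j=1}^{n} Σ_{k=1}^{n} ‖u(μ_j, t_k) − W Wᵀ u(μ_j, t_k)‖² over semi-orthogonal W, with minimum value denoted Σ_{k>N} σ_k²(n). Let Σ_{k>N} σ_{k,∞}² be the minimum of ∫_{𝒫_sup × 𝒯_sup} ‖u(z) − W Wᵀ u(z)‖² dz over semi-orthogonal W. Then Σ_{k>N} σ_k²(n) → Σ_{k>N} σ_{k,∞}² almost surely as n → ∞. -/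

import Mathlib

open Matrix MeasureTheory Filter ProbabilityTheory Topology

/-- Identification of a plain tuple in `ℝ^n` with an element of `EuclideanSpace ℝ (Fin n)`,
so that `‖·‖` denotes the Euclidean norm. -/
def toEuc {n : ℕ} (x : Fin n → ℝ) : EuclideanSpace ℝ (Fin n) := WithLp.toLp 2 x

/-- The empirical mean squared POD projection error
`(|P × [0,T]|/n²) ∑_{j=1}^{n} ∑_{k=1}^{n} ‖u(μ_j, kT/n) − W Wᵀ u(μ_j, kT/n)‖²`
associated with sampled parameters `μs 0, …, μs (n-1)`, the equispaced time grid
`t_k = kT/n`, and a matrix `W`. -/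
noncomputable def empiricalPODError {p Nh N : ℕ} (P : Set (Fin p → ℝ)) (T : ℝ)
    (u : (Fin p → ℝ) × ℝ → EuclideanSpace ℝ (Fin Nh))
    (μs : ℕ → (Fin p → ℝ)) (n : ℕ) (W : Matrix (Fin Nh) (Fin N) ℝ) : ℝ :=
  ((volume (P ×ˢ Set.Icc 0 T)).toReal / (n * n : ℝ)) *
    ∑ j ∈ Finset.range n, ∑ k ∈ Finset.range n,
      ‖u (μs j, ((k : ℝ) + 1) * T / n)
        - toEuc (W.mulVec (Wᵀ.mulVec (u (μs j, ((k : ℝ) + 1) * T / n))))‖ ^ 2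

/-- The continuous mean squared POD projection error
`∫_{P × [0,T]} ‖u(z) − W Wᵀ u(z)‖² dz` associated with a matrix `W`. -/
noncomputable def continuousPODError {p Nh N : ℕ} (P : Set (Fin p → ℝ)) (T : ℝ)
    (u : (Fin p → ℝ) × ℝ → EuclideanSpace ℝ (Fin Nh))
    (W : Matrix (Fin Nh) (Fin N) ℝ) : ℝ :=
  ∫ z in P ×ˢ Set.Icc 0 T, ‖u z - toEuc (W.mulVec (Wᵀ.mulVec (u z)))‖ ^ 2

/-!
For semi-orthogonal `W`, `Q = 1 - W Wᵀ` is an orthogonal projection, so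
`‖x - W Wᵀ x‖² = ∑ a b, Q a b * x a * x b` with `|Q a b| ≤ 1`. Both errors are therefore the same
bounded linear functional of a correlation matrix (the empirical quadrature of `u uᵀ`, resp.
`∫ u uᵀ`), so they differ by at most `∑ a b, |Kₙ a b - K a b|` uniformly in `W`, and minima of
uniformly close functions are close. The empirical correlations converge almost surely: the sums
over the time grid are right-endpoint Riemann sums, which converge uniformly in the parameter by
uniform continuity on the compact domain, and the average over the samples `μⱼ` converges by the
strong law of large numbers.
-/

namespace Matrix

variable {m n : Type*}

theorem abs_apply_le_one_of_isSymm_of_isIdempotentElem [Fintype m] {Q : Matrix m m ℝ}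
    (hsymm : Q.IsSymm) (hidem : IsIdempotentElem Q) (a b : m) : |Q a b| ≤ 1 := by
  have hdiag : Q a a = ∑ d, Q a d ^ 2 := by
    conv_lhs => rw [← hidem.eq]
    simp only [mul_apply, sq, hsymm.apply]
  have hle : ∀ d, Q a d ^ 2 ≤ Q a a := fun d =>
    hdiag ▸ Finset.single_le_sum (fun d _ => sq_nonneg (Q a d)) (Finset.mem_univ d)
  have hdiag_le : Q a a ≤ 1 := by nlinarith [hle a, sq_nonneg (Q a b)]
  exact sq_le_one_iff_abs_le_one _ |>.1 ((hle b).trans hdiag_le)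

theorem isIdempotentElem_one_sub_mul_transpose {α : Type*} [CommRing α] [Fintype m] [Fintype n]
    [DecidableEq m] [DecidableEq n] {W : Matrix m n α} (hW : Wᵀ * W = 1) :
    IsIdempotentElem (1 - W * Wᵀ) :=
  IsIdempotentElem.one_sub <| by
    rw [IsIdempotentElem, Matrix.mul_assoc, ← Matrix.mul_assoc Wᵀ, hW, Matrix.one_mul]

theorem isSymm_one_sub_mul_transpose {α : Type*} [CommRing α] [Fintype n] [DecidableEq m]
    (W : Matrix m n α) : (1 - W * Wᵀ).IsSymm :=
  isSymm_one.sub <| by rw [IsSymm, transpose_mul, transpose_transpose]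

theorem abs_one_sub_mul_transpose_apply_le_one [Fintype m] [Fintype n] [DecidableEq m]
    [DecidableEq n] {W : Matrix m n ℝ} (hW : Wᵀ * W = 1) (a b : m) :
    |(1 - W * Wᵀ : Matrix m m ℝ) a b| ≤ 1 :=
  abs_apply_le_one_of_isSymm_of_isIdempotentElem (isSymm_one_sub_mul_transpose W)
    (isIdempotentElem_one_sub_mul_transpose hW) a b

end Matrix

theorem norm_sub_mulVec_mulVec_transpose_sq {Nh N : ℕ} {W : Matrix (Fin Nh) (Fin N) ℝ}
    (hW : Wᵀ * W = 1) (x : EuclideanSpace ℝ (Fin Nh)) :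
    ‖x - toEuc (W *ᵥ (Wᵀ *ᵥ x))‖ ^ 2
      = ∑ a, ∑ b, (1 - W * Wᵀ : Matrix (Fin Nh) (Fin Nh) ℝ) a b * (x a * x b) := by
  set Q : Matrix (Fin Nh) (Fin Nh) ℝ := 1 - W * Wᵀ
  have hQ : x - toEuc (W *ᵥ (Wᵀ *ᵥ x)) = toEuc (Q *ᵥ x) := by
    ext a; simp [Q, toEuc, mulVec_mulVec, sub_mulVec]
  have hsymm : Q.IsSymm := isSymm_one_sub_mul_transpose W
  have hQQ : Q *ᵥ x ⬝ᵥ Q *ᵥ x = x ⬝ᵥ Q *ᵥ x := by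
    rw [dotProduct_mulVec, ← mulVec_transpose, hsymm.eq, mulVec_mulVec,
      (isIdempotentElem_one_sub_mul_transpose hW).eq, dotProduct_comm]
  calc ‖x - toEuc (W *ᵥ (Wᵀ *ᵥ x))‖ ^ 2 = Q *ᵥ x ⬝ᵥ Q *ᵥ x := by
        rw [hQ, EuclideanSpace.real_norm_sq_eq]
        simp [toEuc, dotProduct, sq]
    _ = x ⬝ᵥ Q *ᵥ x := hQQ
    _ = _ := by
        simp only [dotProduct, mulVec, Finset.mul_sum]
        exact Finset.sum_congr rfl fun a _ => Finset.sum_congr rfl fun b _ => by ring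

theorem TendstoUniformlyOn.tendsto_of_isMinOn {α ι : Type*} {l : Filter ι} {F : ι → α → ℝ}
    {f : α → ℝ} {S : Set α} (h : TendstoUniformlyOn F f l S) {x : ι → α} (hxS : ∀ i, x i ∈ S)
    (hx : ∀ i, IsMinOn (F i) S (x i)) {y : α} (hyS : y ∈ S) (hy : IsMinOn f S y) :
    Tendsto (fun i => F i (x i)) l (𝓝 (f y)) := by
  refine Metric.tendsto_nhds.2 fun ε hε => ?_
  filter_upwards [Metric.tendstoUniformlyOn_iff.1 h ε hε] with i hi
  have hup : F i (x i) < f y + ε := by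
    linarith [isMinOn_iff.1 (hx i) y hyS, (abs_lt.1 (hi y hyS)).1]
  have hlow : f y - ε < F i (x i) := by
    linarith [isMinOn_iff.1 hy (x i) (hxS i), (abs_lt.1 (hi (x i) (hxS i))).2]
  rw [Real.dist_eq, abs_sub_lt_iff]
  constructor <;> linarith

theorem tendstoUniformlyOn_sum_sum_mul {α ι m : Type*} [Fintype m] {l : Filter ι} {S : Set α}
    {c : α → Matrix m m ℝ} {M : ℝ} (hc : ∀ w ∈ S, ∀ a b, |c w a b| ≤ M)
    {A : ι → Matrix m m ℝ} {A' : Matrix m m ℝ} (hA : Tendsto A l (𝓝 A')) :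
    TendstoUniformlyOn (fun i w => ∑ a, ∑ b, c w a b * A i a b)
      (fun w => ∑ a, ∑ b, c w a b * A' a b) l S := by
  set e : ι → ℝ := fun i => ∑ a, ∑ b, M * |A' a b - A i a b|
  have he : Tendsto e l (𝓝 0) := by
    have hentry a b : Tendsto (fun i => A i a b) l (𝓝 (A' a b)) :=
      tendsto_pi_nhds.1 (tendsto_pi_nhds.1 hA a) b
    have := tendsto_finsetSum Finset.univ fun a _ => tendsto_finsetSum Finset.univ fun b _ =>
      ((tendsto_const_nhds (x := A' a b)).sub (hentry a b)).abs.const_mul M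
    simpa using this
  refine Metric.tendstoUniformlyOn_iff.2 fun ε hε => ?_
  filter_upwards [he.eventually (gt_mem_nhds hε)] with i hi w hw
  calc dist (∑ a, ∑ b, c w a b * A' a b) (∑ a, ∑ b, c w a b * A i a b)
      ≤ ∑ a, ∑ b, |c w a b| * |A' a b - A i a b| := by
        rw [Real.dist_eq, ← Finset.sum_sub_distrib]
        refine (Finset.abs_sum_le_sum_abs _ _).trans (Finset.sum_le_sum fun a _ => ?_)
        rw [← Finset.sum_sub_distrib]
        refine (Finset.abs_sum_le_sum_abs _ _).trans (Finset.sum_le_sum fun b _ => ?_)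
        rw [← mul_sub, abs_mul]
    _ ≤ e i := Finset.sum_le_sum fun a _ => Finset.sum_le_sum fun b _ =>
        mul_le_mul_of_nonneg_right (hc w hw a b) (abs_nonneg _)
    _ < ε := hi

section RiemannSum

open Set

noncomputable def riemannSum (T : ℝ) (f : ℝ → ℝ) (n : ℕ) : ℝ :=
  T / n * ∑ k ∈ Finset.range n, f ((k + 1) * T / n)

theorem abs_riemannSum_sub_integral_le {f : ℝ → ℝ} {T ε : ℝ} {n : ℕ} (hT : 0 ≤ T) (hn : 0 < n)
    (hf : ContinuousOn f (Icc 0 T))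
    (hosc : ∀ s ∈ Icc 0 T, ∀ t ∈ Icc 0 T, |s - t| ≤ T / n → |f s - f t| ≤ ε) :
    |riemannSum T f n - ∫ t in 0..T, f t| ≤ T * ε := by
  have hn' : (0 : ℝ) < n := by exact_mod_cast hn
  set a : ℕ → ℝ := fun k => k * T / n with ha
  have ha_mem : ∀ k ≤ n, a k ∈ Icc 0 T := fun k hk => by
    have : (k : ℝ) ≤ n := by exact_mod_cast hk
    refine ⟨by positivity, div_le_of_le_mul₀ hn'.le hT ?_⟩
    nlinarith
  have hstep : ∀ k, a (k + 1) - a k = T / n := fun k => by simp only [ha]; push_cast; ring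
  have hsucc : ∀ k : ℕ, ((k : ℝ) + 1) * T / n = a (k + 1) := fun k => by
    simp only [ha]; push_cast; ring
  have hint : ∀ k < n, IntervalIntegrable f volume (a k) (a (k + 1)) := fun k hk =>
    (hf.mono (Icc_subset_Icc (ha_mem k hk.le).1 (ha_mem (k + 1) hk).2)).intervalIntegrable_of_Icc
      (by linarith [hstep k, div_nonneg hT hn'.le])
  have hcell : ∀ k ∈ Finset.range n,
      |T / n * f (a (k + 1)) - ∫ t in a k..a (k + 1), f t| ≤ T / n * ε := fun k hk => by
    rw [Finset.mem_range] at hk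
    have hle : a k ≤ a (k + 1) := by linarith [hstep k, div_nonneg hT hn'.le]
    have hconst : T / n * f (a (k + 1)) = ∫ _ in a k..a (k + 1), f (a (k + 1)) := by
      rw [intervalIntegral.integral_const, hstep, smul_eq_mul]
    rw [hconst, ← intervalIntegral.integral_sub intervalIntegrable_const (hint k hk), ← hstep k,
      mul_comm, ← abs_of_nonneg (sub_nonneg.2 hle), ← Real.norm_eq_abs]
    refine intervalIntegral.norm_integral_le_of_norm_le_const fun t ht => ?_
    rw [uIoc_of_le hle] at ht
    have ht' : t ∈ Icc 0 T := ⟨(ha_mem k hk.le).1.trans ht.1.le, ht.2.trans (ha_mem (k + 1) hk).2⟩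
    refine hosc _ (ha_mem (k + 1) hk) t ht' ?_
    rw [abs_of_nonneg (by linarith [ht.2]), ← hstep k]
    linarith [ht.1]
  have hsplit : ∫ t in 0..T, f t = ∑ k ∈ Finset.range n, ∫ t in a k..a (k + 1), f t := by
    rw [intervalIntegral.sum_integral_adjacent_intervals hint]
    congr 1
    · simp [ha]
    · simp only [ha]; field_simp
  calc |riemannSum T f n - ∫ t in 0..T, f t|
      = |∑ k ∈ Finset.range n, (T / n * f (a (k + 1)) - ∫ t in a k..a (k + 1), f t)| := by
        simp only [riemannSum, hsplit, hsucc, Finset.sum_sub_distrib, Finset.mul_sum]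
    _ ≤ ∑ _k ∈ Finset.range n, T / n * ε :=
        (Finset.abs_sum_le_sum_abs _ _).trans (Finset.sum_le_sum hcell)
    _ = T * ε := by rw [Finset.sum_const, Finset.card_range, nsmul_eq_mul]; field_simp

theorem tendstoUniformlyOn_riemannSum {X : Type*} [PseudoMetricSpace X] {P : Set X}
    (hP : IsCompact P) {T : ℝ} (hT : 0 ≤ T) {φ : X × ℝ → ℝ} (hφ : ContinuousOn φ (P ×ˢ Icc 0 T)) :
    TendstoUniformlyOn (fun n x => riemannSum T (fun t => φ (x, t)) n)
      (fun x => ∫ t in 0..T, φ (x, t)) atTop P := by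
  refine Metric.tendstoUniformlyOn_iff.2 fun ε hε => ?_
  obtain ⟨δ, hδ, hφδ⟩ := Metric.uniformContinuousOn_iff_le.1
    ((hP.prod isCompact_Icc).uniformContinuousOn_of_continuous hφ) (ε / (T + 1)) (by positivity)
  filter_upwards [eventually_gt_atTop 0,
    (tendsto_const_div_atTop_nhds_zero_nat T).eventually (ge_mem_nhds hδ)] with n hn hTn x hx
  have hslice : ContinuousOn (fun t => φ (x, t)) (Icc 0 T) :=
    hφ.comp (by fun_prop) fun t ht => ⟨hx, ht⟩
  have hosc : ∀ s ∈ Icc 0 T, ∀ t ∈ Icc 0 T, |s - t| ≤ T / n →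
      |φ (x, s) - φ (x, t)| ≤ ε / (T + 1) := fun s hs t ht hst => by
    simpa [Real.dist_eq] using
      hφδ (x, s) ⟨hx, hs⟩ (x, t) ⟨hx, ht⟩
        (by simpa [Prod.dist_eq, Real.dist_eq] using hst.trans hTn)
  rw [dist_comm, Real.dist_eq]
  calc _ ≤ T * (ε / (T + 1)) := abs_riemannSum_sub_integral_le hT hn hslice hosc
    _ < ε := by rw [mul_div_assoc', div_lt_iff₀ (by positivity)]; nlinarith

end RiemannSum

theorem ProbabilityTheory.ae_tendsto_average_comp {Ω X : Type*} [MeasureSpace Ω]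
    [MeasurableSpace X] {ν : Measure X} {ξ : ℕ → Ω → X} (hξ : ∀ j, Measurable (ξ j))
    (hindep : iIndepFun ξ ℙ) (hlaw : ∀ j, Measure.map (ξ j) ℙ = ν) {H : X → ℝ}
    (hH : Measurable H) (hHint : Integrable H ν) :
    ∀ᵐ ω, Tendsto (fun n : ℕ => (n : ℝ)⁻¹ * ∑ j ∈ Finset.range n, H (ξ j ω)) atTop
      (𝓝 (∫ x, H x ∂ν)) := by
  have hident : ∀ j, IdentDistrib (H ∘ ξ j) (H ∘ ξ 0) :=
    fun j => IdentDistrib.comp ⟨(hξ j).aemeasurable, (hξ 0).aemeasurable, by rw [hlaw, hlaw]⟩ hH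
  have hint : Integrable (H ∘ ξ 0) := by
    rw [← hlaw 0] at hHint
    exact hHint.comp_measurable (hξ 0)
  have hmean : ∫ ω, (H ∘ ξ 0) ω = ∫ x, H x ∂ν := by
    rw [← hlaw 0, integral_map (hξ 0).aemeasurable hH.aestronglyMeasurable]; rfl
  have hslln := strong_law_ae (fun j => H ∘ ξ j) hint
    (fun i j hij => (hindep.indepFun hij).comp hH hH) hident
  rw [hmean] at hslln
  simpa using hslln

theorem tendsto_average_of_tendstoUniformlyOn {X : Type*} {P : Set X} {g : ℕ → X → ℝ}
    {H : X → ℝ} (hg : TendstoUniformlyOn g H atTop P) {x : ℕ → X} (hx : ∀ j, x j ∈ P) {L : ℝ}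
    (hH : Tendsto (fun n : ℕ => (n : ℝ)⁻¹ * ∑ j ∈ Finset.range n, H (x j)) atTop (𝓝 L)) :
    Tendsto (fun n : ℕ => (n : ℝ)⁻¹ * ∑ j ∈ Finset.range n, g n (x j)) atTop (𝓝 L) := by
  suffices hdiff : Tendsto (fun n : ℕ => (n : ℝ)⁻¹ * ∑ j ∈ Finset.range n, (g n (x j) - H (x j)))
      atTop (𝓝 0) by
    simpa [mul_sub, Finset.sum_sub_distrib] using hdiff.add hH
  refine Metric.tendsto_nhds.2 fun ε hε => ?_
  filter_upwards [Metric.tendstoUniformlyOn_iff.1 hg (ε / 2) (half_pos hε)] with n hn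
  rw [Real.dist_eq, sub_zero, abs_mul, abs_inv, Nat.abs_cast]
  calc (n : ℝ)⁻¹ * |∑ j ∈ Finset.range n, (g n (x j) - H (x j))|
      ≤ (n : ℝ)⁻¹ * ∑ _j ∈ Finset.range n, ε / 2 := by
        gcongr
        refine (Finset.abs_sum_le_sum_abs _ _).trans (Finset.sum_le_sum fun j _ => ?_)
        rw [abs_sub_comm]
        exact (hn (x j) (hx j)).le
    _ ≤ ε / 2 := by
        rw [Finset.sum_const, Finset.card_range, nsmul_eq_mul, ← mul_assoc]
        exact mul_le_of_le_one_left (half_pos hε).le (inv_mul_le_one_of_le₀ le_rfl (by positivity))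
    _ < ε := half_lt_self hε

theorem ae_forall_mem_of_map_eq_smul_restrict {Ω X : Type*} [MeasureSpace Ω] [MeasurableSpace X]
    {ν : Measure X} {P : Set X} (hP : MeasurableSet P) {c : ENNReal} {ξ : ℕ → Ω → X}
    (hξ : ∀ j, Measurable (ξ j)) (hlaw : ∀ j, Measure.map (ξ j) ℙ = c • ν.restrict P) :
    ∀ᵐ ω, ∀ j, ξ j ω ∈ P :=
  ae_all_iff.2 fun j => ae_of_ae_map (hξ j).aemeasurable <| by
    rw [hlaw j]; exact Measure.ae_smul_measure (ae_restrict_mem hP) c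

noncomputable def empiricalIntegral {p : ℕ} (P : Set (Fin p → ℝ)) (T : ℝ) (μs : ℕ → Fin p → ℝ)
    (n : ℕ) (φ : (Fin p → ℝ) × ℝ → ℝ) : ℝ :=
  ((volume (P ×ˢ Set.Icc 0 T)).toReal / (n * n : ℝ)) *
    ∑ j ∈ Finset.range n, ∑ k ∈ Finset.range n, φ (μs j, ((k : ℝ) + 1) * T / n)

section EmpiricalIntegral

open Set

variable {p : ℕ} {P : Set (Fin p → ℝ)} {T : ℝ} {μs : ℕ → Fin p → ℝ} {n : ℕ}

theorem empiricalIntegral_finset_sum {ι : Type*} (s : Finset ι) (φ : ι → (Fin p → ℝ) × ℝ → ℝ) :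
    empiricalIntegral P T μs n (fun z => ∑ i ∈ s, φ i z)
      = ∑ i ∈ s, empiricalIntegral P T μs n (φ i) := by
  simp only [empiricalIntegral, Finset.mul_sum]
  rw [Finset.sum_congr rfl fun j _ => Finset.sum_comm, Finset.sum_comm]

theorem empiricalIntegral_const_mul (c : ℝ) (φ : (Fin p → ℝ) × ℝ → ℝ) :
    empiricalIntegral P T μs n (fun z => c * φ z) = c * empiricalIntegral P T μs n φ := by
  simp only [empiricalIntegral, Finset.mul_sum]
  exact Finset.sum_congr rfl fun j _ => Finset.sum_congr rfl fun k _ => by ring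

theorem empiricalIntegral_congr (hT : 0 ≤ T) (hμs : ∀ j, μs j ∈ P)
    {φ ψ : (Fin p → ℝ) × ℝ → ℝ} (h : EqOn φ ψ (P ×ˢ Icc 0 T)) :
    empiricalIntegral P T μs n φ = empiricalIntegral P T μs n ψ := by
  unfold empiricalIntegral
  congr 1
  refine Finset.sum_congr rfl fun j _ => Finset.sum_congr rfl fun k hk => h ⟨hμs j, ?_, ?_⟩
  · positivity
  · have hk : (k : ℝ) + 1 ≤ n := by exact_mod_cast Finset.mem_range.1 hk
    exact div_le_of_le_mul₀ (by positivity) hT (by nlinarith)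

theorem empiricalIntegral_eq_mul_average_riemannSum (hT : 0 ≤ T) (φ : (Fin p → ℝ) × ℝ → ℝ) :
    empiricalIntegral P T μs n φ
      = (volume P).toReal *
          ((n : ℝ)⁻¹ * ∑ j ∈ Finset.range n, riemannSum T (fun t => φ (μs j, t)) n) := by
  have hvol : (volume (P ×ˢ Icc 0 T)).toReal = (volume P).toReal * T := by
    rw [Measure.volume_eq_prod, Measure.prod_prod, Real.volume_Icc, sub_zero, ENNReal.toReal_mul,
      ENNReal.toReal_ofReal hT]
  simp only [empiricalIntegral, riemannSum, hvol, Finset.mul_sum]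
  refine Finset.sum_congr rfl fun j _ => Finset.sum_congr rfl fun k _ => ?_
  ring

end EmpiricalIntegral

section SampledQuadrature

open Set

variable {p : ℕ} {P : Set (Fin p → ℝ)} {T : ℝ} {Ω : Type*} [MeasureSpace Ω]
  {μ : ℕ → Ω → Fin p → ℝ}

theorem ae_tendsto_empiricalIntegral_of_continuous (hP : IsCompact P) (hPpos : 0 < volume P)
    (hT : 0 ≤ T) (hmeas : ∀ j, Measurable (μ j)) (hindep : iIndepFun μ ℙ)
    (hunif : ∀ j, Measure.map (μ j) ℙ = (volume P)⁻¹ • volume.restrict P)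
    {ψ : (Fin p → ℝ) × ℝ → ℝ} (hψ : Continuous ψ) :
    ∀ᵐ ω, Tendsto (fun n => empiricalIntegral P T (fun j => μ j ω) n ψ) atTop
      (𝓝 (∫ z in P ×ˢ Icc 0 T, ψ z)) := by
  set H : (Fin p → ℝ) → ℝ := fun x => ∫ t in 0..T, ψ (x, t)
  have hH : Continuous H :=
    intervalIntegral.continuous_parametric_intervalIntegral_of_continuous' (by fun_prop) 0 T
  have hHint : Integrable H ((volume P)⁻¹ • volume.restrict P) :=
    (hH.continuousOn.integrableOn_compact hP).smul_measure (ENNReal.inv_ne_top.2 hPpos.ne')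
  have hmean : (volume P).toReal * ∫ x, H x ∂((volume P)⁻¹ • volume.restrict P)
      = ∫ z in P ×ˢ Icc 0 T, ψ z := by
    rw [integral_smul_measure, ENNReal.toReal_inv, smul_eq_mul, ← mul_assoc,
      mul_inv_cancel₀ (ENNReal.toReal_pos hPpos.ne' hP.measure_lt_top.ne).ne', one_mul,
      Measure.volume_eq_prod, setIntegral_prod _
        (hψ.continuousOn.integrableOn_compact (hP.prod isCompact_Icc))]
    refine setIntegral_congr_fun hP.measurableSet fun x _ => ?_
    rw [integral_Icc_eq_integral_Ioc, ← intervalIntegral.integral_of_le hT]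
  filter_upwards [ProbabilityTheory.ae_tendsto_average_comp hmeas hindep hunif hH.measurable hHint,
    ae_forall_mem_of_map_eq_smul_restrict hP.measurableSet hmeas hunif] with ω hω hωP
  have hlim := (tendsto_average_of_tendstoUniformlyOn
    (tendstoUniformlyOn_riemannSum hP hT hψ.continuousOn) hωP hω).const_mul (volume P).toReal
  rw [hmean] at hlim
  simpa only [empiricalIntegral_eq_mul_average_riemannSum hT] using hlim

theorem ae_tendsto_empiricalIntegral (hP : IsCompact P) (hPpos : 0 < volume P) (hT : 0 ≤ T)
    (hmeas : ∀ j, Measurable (μ j)) (hindep : iIndepFun μ ℙ)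
    (hunif : ∀ j, Measure.map (μ j) ℙ = (volume P)⁻¹ • volume.restrict P)
    {φ : (Fin p → ℝ) × ℝ → ℝ} (hφ : ContinuousOn φ (P ×ˢ Icc 0 T)) :
    ∀ᵐ ω, Tendsto (fun n => empiricalIntegral P T (fun j => μ j ω) n φ) atTop
      (𝓝 (∫ z in P ×ˢ Icc 0 T, φ z)) := by
  have hK : IsClosed (P ×ˢ Icc 0 T) := hP.isClosed.prod isClosed_Icc
  -- A continuous extension makes `x ↦ ∫ t in 0..T, ψ (x, t)` continuous on all of `ℝᵖ`, hence
  -- measurable, as the strong law requires.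
  obtain ⟨ψ, hψ⟩ := ContinuousMap.exists_restrict_eq hK ⟨_, hφ.domRestrict⟩
  have hφψ : EqOn φ ψ (P ×ˢ Icc 0 T) := fun z hz => (DFunLike.congr_fun hψ ⟨z, hz⟩).symm
  filter_upwards [ae_tendsto_empiricalIntegral_of_continuous hP hPpos hT hmeas hindep hunif
    ψ.continuous, ae_forall_mem_of_map_eq_smul_restrict hP.measurableSet hmeas hunif]
    with ω hω hωP
  rw [setIntegral_congr_fun hK.measurableSet hφψ]
  simpa only [empiricalIntegral_congr hT hωP hφψ] using hω

end SampledQuadrature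

section PODError

open Set Matrix

variable {p Nh N : ℕ} {P : Set (Fin p → ℝ)} {T : ℝ}
  {u : (Fin p → ℝ) × ℝ → EuclideanSpace ℝ (Fin Nh)} {W : Matrix (Fin Nh) (Fin N) ℝ}

theorem empiricalPODError_eq_sum (hW : Wᵀ * W = 1) (μs : ℕ → Fin p → ℝ) (n : ℕ) :
    empiricalPODError P T u μs n W
      = ∑ a, ∑ b, (1 - W * Wᵀ : Matrix (Fin Nh) (Fin Nh) ℝ) a b *
          empiricalIntegral P T μs n (fun z => u z a * u z b) := by
  change empiricalIntegral P T μs n (fun z => ‖u z - toEuc (W *ᵥ (Wᵀ *ᵥ u z))‖ ^ 2) = _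
  simp only [norm_sub_mulVec_mulVec_transpose_sq hW, empiricalIntegral_finset_sum,
    empiricalIntegral_const_mul]

theorem continuousPODError_eq_sum (hW : Wᵀ * W = 1)
    (hint : ∀ a b, IntegrableOn (fun z => u z a * u z b) (P ×ˢ Icc 0 T)) :
    continuousPODError P T u W
      = ∑ a, ∑ b, (1 - W * Wᵀ : Matrix (Fin Nh) (Fin Nh) ℝ) a b *
          ∫ z in P ×ˢ Icc 0 T, u z a * u z b := by
  simp only [continuousPODError, norm_sub_mulVec_mulVec_transpose_sq hW]
  refine (integral_finsetSum _ fun a _ => integrable_finsetSum _ fun b _ =>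
    (hint a b).const_mul _).trans (Finset.sum_congr rfl fun a _ => ?_)
  refine (integral_finsetSum _ fun b _ => (hint a b).const_mul _).trans ?_
  simp only [integral_const_mul]

end PODError

theorem empirical_pod_error_tendsto_continuous_general
    {p Nh N : ℕ}
    (P : Set (Fin p → ℝ)) (hP : IsCompact P) (hPpos : 0 < volume P)
    (T : ℝ) (hT : 0 < T)
    (u : (Fin p → ℝ) × ℝ → EuclideanSpace ℝ (Fin Nh))
    (hu : ContinuousOn u (P ×ˢ Set.Icc 0 T))
    {Ω : Type} [MeasureSpace Ω]
    (μ : ℕ → Ω → (Fin p → ℝ))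
    (hmeas : ∀ j, Measurable (μ j))
    (hindep : iIndepFun μ ℙ)
    (hunif : ∀ j, Measure.map (μ j) ℙ = (volume P)⁻¹ • volume.restrict P)
    (Vn : ℕ → Ω → Matrix (Fin Nh) (Fin N) ℝ)
    (hVn : ∀ n ω, (Vn n ω)ᵀ * Vn n ω = 1)
    (hVnmin : ∀ n ω, ∀ W : Matrix (Fin Nh) (Fin N) ℝ, Wᵀ * W = 1 →
      empiricalPODError P T u (fun j => μ j ω) n (Vn n ω)
        ≤ empiricalPODError P T u (fun j => μ j ω) n W)
    (Vinf : Matrix (Fin Nh) (Fin N) ℝ)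
    (hVinf : Vinfᵀ * Vinf = 1)
    (hVinfmin : ∀ W : Matrix (Fin Nh) (Fin N) ℝ, Wᵀ * W = 1 →
      continuousPODError P T u Vinf ≤ continuousPODError P T u W) :
    ∀ᵐ ω : Ω, Tendsto
      (fun n : ℕ => empiricalPODError P T u (fun j => μ j ω) n (Vn n ω))
      atTop (𝓝 (continuousPODError P T u Vinf)) := by
  have hcorr : ∀ a b, ContinuousOn (fun z => u z a * u z b) (P ×ˢ Set.Icc 0 T) := fun a b =>
    ((PiLp.continuous_apply 2 _ a).comp_continuousOn hu).mul
      ((PiLp.continuous_apply 2 _ b).comp_continuousOn hu)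
  have hint a b : IntegrableOn (fun z => u z a * u z b) (P ×ˢ Set.Icc 0 T) :=
    (hcorr a b).integrableOn_compact (hP.prod isCompact_Icc)
  filter_upwards [ae_all_iff.2 fun a => ae_all_iff.2 fun b =>
    ae_tendsto_empiricalIntegral hP hPpos hT.le hmeas hindep hunif (hcorr a b)] with ω hω
  have hconv : TendstoUniformlyOn (fun n W => empiricalPODError P T u (fun j => μ j ω) n W)
      (continuousPODError P T u) atTop {W : Matrix (Fin Nh) (Fin N) ℝ | Wᵀ * W = 1} := by
    refine ((tendstoUniformlyOn_sum_sum_mul (c := fun W => 1 - W * Wᵀ) (M := 1)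
      (fun W hW => abs_one_sub_mul_transpose_apply_le_one hW)
      (tendsto_pi_nhds.2 fun a => tendsto_pi_nhds.2 (hω a))).congr ?_).congr_right ?_
    · exact Eventually.of_forall fun n W hW => (empiricalPODError_eq_sum hW _ n).symm
    · exact fun W hW => (continuousPODError_eq_sum hW hint).symm
  exact hconv.tendsto_of_isMinOn (fun n => hVn n ω) (fun n => isMinOn_iff.2 (hVnmin n ω)) hVinf
    (isMinOn_iff.2 hVinfmin)

/-- **Convergence of the optimal empirical POD error to the optimal continuous POD error.**
With parameters sampled i.i.d. uniformly on the compact set `P` and the equispaced time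
grid on `[0,T]`, if `Vn n ω` minimizes the empirical error over semi-orthogonal matrices
(so that `empiricalPODError … (Vn n ω) = Σ_{k>N} σ_k²(n)`) and `Vinf` minimizes the
continuous error over semi-orthogonal matrices (so that
`continuousPODError … Vinf = Σ_{k>N} σ_{k,∞}²`), then almost surely
`Σ_{k>N} σ_k²(n) → Σ_{k>N} σ_{k,∞}²` as `n → ∞`. -/
theorem empirical_pod_error_tendsto_continuous
    {p Nh N : ℕ} (hNle : N ≤ Nh)
    (P : Set (Fin p → ℝ)) (hP : IsCompact P) (hPpos : 0 < volume P)
    (T : ℝ) (hT : 0 < T)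
    (u : (Fin p → ℝ) × ℝ → EuclideanSpace ℝ (Fin Nh))
    (hu : ContinuousOn u (P ×ˢ Set.Icc 0 T))
    {Ω : Type} [MeasureSpace Ω] [IsProbabilityMeasure (ℙ : Measure Ω)]
    (μ : ℕ → Ω → (Fin p → ℝ))
    (hmeas : ∀ j, Measurable (μ j))
    (hindep : iIndepFun μ ℙ)
    (hunif : ∀ j, Measure.map (μ j) ℙ = (volume P)⁻¹ • volume.restrict P)
    (Vn : ℕ → Ω → Matrix (Fin Nh) (Fin N) ℝ)
    (hVn : ∀ n ω, (Vn n ω)ᵀ * Vn n ω = 1)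
    (hVnmin : ∀ n ω, ∀ W : Matrix (Fin Nh) (Fin N) ℝ, Wᵀ * W = 1 →
      empiricalPODError P T u (fun j => μ j ω) n (Vn n ω)
        ≤ empiricalPODError P T u (fun j => μ j ω) n W)
    (Vinf : Matrix (Fin Nh) (Fin N) ℝ)
    (hVinf : Vinfᵀ * Vinf = 1)
    (hVinfmin : ∀ W : Matrix (Fin Nh) (Fin N) ℝ, Wᵀ * W = 1 →
      continuousPODError P T u Vinf ≤ continuousPODError P T u W) :
    ∀ᵐ ω : Ω, Tendsto
      (fun n : ℕ => empiricalPODError P T u (fun j => μ j ω) n (Vn n ω))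
      atTop (𝓝 (continuousPODError P T u Vinf)) :=
  empirical_pod_error_tendsto_continuous_general P hP hPpos T hT u hu μ hmeas hindep hunif Vn hVn
    hVnmin Vinf hVinf hVinfmin
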